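/- arXiv:2507.08381 — 2 statements merged into one kernel-verified Lean document; each statement's English description precedes it below -/
import Mathlib

section
/- The semiring D₂ satisfies the identity u ≈ v if and only if for every entry u_i of u there exists an entry v_j of v with c(v_j) ⊆ c(u_i), and for every entry v_k of v there exists an entry u_l of u with c(u_l) ⊆ c(v_k). -/
/-- The value in `Bool` (under multiplication `mul` and assignment `φ`) of a word,
i.e. a nonempty list of variables: the product of the images of its letters, in order.
(The value `false` on the empty list is junk; words are required to be nonempty.) -/
def wordVal (mul : Bool → Bool → Bool) (φ : ℕ → Bool) : List ℕ → Bool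
  | [] => false
  | a :: rest => rest.foldl (fun acc x => mul acc (φ x)) (φ a)

/-- The value of a term, i.e. a nonempty list of words: the sum (under `add`) of the
values of its entries. (The value `false` on the empty list is junk; terms are
required to be nonempty.) -/
def termVal (add mul : Bool → Bool → Bool) (φ : ℕ → Bool) : List (List ℕ) → Bool
  | [] => false
  | w :: rest => rest.foldl (fun acc q => add acc (wordVal mul φ q)) (wordVal mul φ w)

/-- The two-element semiring on `Bool` with addition `add` and multiplication `mul`
satisfies the identity `u ≈ v`. -/
def Satisfies (add mul : Bool → Bool → Bool) (u v : List (List ℕ)) : Prop :=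
  ∀ φ : ℕ → Bool, termVal add mul φ u = termVal add mul φ v

lemma foldl_and (φ : ℕ → Bool) : ∀ (l : List ℕ) (b : Bool),
    l.foldl (fun acc x => acc && φ x) b = (b && l.all φ) := by
  intro l
  induction l with
  | nil => simp
  | cons a t ih => intro b; simp [List.foldl_cons, ih, Bool.and_assoc]

lemma wordVal_eq (φ : ℕ → Bool) (w : List ℕ) (hw : w ≠ []) :
    wordVal (fun x y => x && y) φ w = w.all φ := by
  cases w with
  | nil => exact absurd rfl hw
  | cons a t => simp [wordVal, foldl_and]

lemma foldl_or (f : List ℕ → Bool) : ∀ (l : List (List ℕ)) (b : Bool),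
    l.foldl (fun acc q => acc || f q) b = (b || l.any f) := by
  intro l
  induction l with
  | nil => simp
  | cons a t ih => intro b; simp [List.foldl_cons, ih, Bool.or_assoc]

lemma any_wordVal (φ : ℕ → Bool) : ∀ (t : List (List ℕ)), (∀ w ∈ t, w ≠ []) →
    (t.any fun q => wordVal (fun x y => x && y) φ q) = t.any (fun w => w.all φ) := by
  intro t
  induction t with
  | nil => simp
  | cons b s ih =>
    intro h
    simp only [List.any_cons]
    rw [wordVal_eq φ b (h b (by simp)), ih (fun w hw => h w (by simp [hw]))]

lemma termVal_eq (φ : ℕ → Bool) (u : List (List ℕ)) (hu : u ≠ [])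
    (hu' : ∀ w ∈ u, w ≠ []) :
    termVal (fun x y => x || y) (fun x y => x && y) φ u = u.any (fun w => w.all φ) := by
  cases u with
  | nil => exact absurd rfl hu
  | cons w t =>
    have hw := wordVal_eq φ w (hu' w (by simp))
    have : t.foldl (fun acc q => acc || wordVal (fun x y => x && y) φ q)
        (wordVal (fun x y => x && y) φ w)
        = (wordVal (fun x y => x && y) φ w || t.any (fun q => wordVal (fun x y => x && y) φ q)) :=
      foldl_or _ t _
    simp only [termVal]
    rw [this, hw, List.any_cons]
    congr 1
    exact any_wordVal φ t (fun w hw => hu' w (by simp [hw]))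

/-- Lemma 1.1(4): `D₂` (addition `∨`, multiplication `∧`) satisfies `u ≈ v`
iff every entry of `u` has an entry of `v` with content contained in its content,
and vice versa. -/
theorem D2_satisfies_iff (u v : List (List ℕ))
    (hu : u ≠ []) (hv : v ≠ []) (hu' : ∀ w ∈ u, w ≠ []) (hv' : ∀ w ∈ v, w ≠ []) :
    Satisfies (fun x y => x || y) (fun x y => x && y) u v ↔
      ((∀ ui ∈ u, ∃ vj ∈ v, ∀ n ∈ vj, n ∈ ui) ∧
       (∀ vk ∈ v, ∃ ul ∈ u, ∀ n ∈ ul, n ∈ vk)) := by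
  have key : Satisfies (fun x y => x || y) (fun x y => x && y) u v ↔
      ∀ φ : ℕ → Bool, u.any (fun w => w.all φ) = v.any (fun w => w.all φ) := by
    constructor
    · intro h φ; rw [← termVal_eq φ u hu hu', ← termVal_eq φ v hv hv']; exact h φ
    · intro h φ; rw [termVal_eq φ u hu hu', termVal_eq φ v hv hv']; exact h φ
  rw [key]
  constructor
  · intro h
    constructor
    · intro ui hui
      have := h (fun n => decide (n ∈ ui))
      have hl : u.any (fun w => w.all (fun n => decide (n ∈ ui))) = true := by
        rw [List.any_eq_true]
        exact ⟨ui, hui, by simp [List.all_eq_true]⟩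
      rw [this, List.any_eq_true] at hl
      obtain ⟨vj, hvj, hall⟩ := hl
      simp [List.all_eq_true] at hall
      exact ⟨vj, hvj, hall⟩
    · intro vk hvk
      have := h (fun n => decide (n ∈ vk))
      have hl : v.any (fun w => w.all (fun n => decide (n ∈ vk))) = true := by
        rw [List.any_eq_true]
        exact ⟨vk, hvk, by simp [List.all_eq_true]⟩
      rw [← this, List.any_eq_true] at hl
      obtain ⟨ul, hul, hall⟩ := hl
      simp [List.all_eq_true] at hall
      exact ⟨ul, hul, hall⟩
  · rintro ⟨h1, h2⟩ φ
    apply Bool.eq_iff_iff.mpr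
    simp only [List.any_eq_true, List.all_eq_true]
    constructor
    · rintro ⟨ui, hui, hall⟩
      obtain ⟨vj, hvj, hsub⟩ := h1 ui hui
      exact ⟨vj, hvj, fun n hn => hall n (hsub n hn)⟩
    · rintro ⟨vk, hvk, hall⟩
      obtain ⟨ul, hul, hsub⟩ := h2 vk hvk
      exact ⟨ul, hul, fun n hn => hall n (hsub n hn)⟩
end

section
/- The semiring T₂ satisfies the identity u ≈ v if and only if either (both u and v contain an entry of length at least 2), or (every entry of u and every entry of v has length 1 and C(u) = C(v)). -/
lemma foldl_or_aux {α : Type*} (f : α → Bool) (l : List α) (b : Bool) :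
    l.foldl (fun acc q => acc || f q) b = (b || l.any f) := by
  induction l generalizing b with
  | nil => simp
  | cons a t ih => simp [List.foldl_cons, ih, Bool.or_assoc]

lemma termVal_any (φ : ℕ → Bool) (l : List (List ℕ)) :
    termVal (fun x y => x || y) (fun _ _ => true) φ l
      = l.any (wordVal (fun _ _ => true) φ) := by
  cases l with
  | nil => rfl
  | cons w rest => simp [termVal, foldl_or_aux]

lemma foldl_true (l : List ℕ) : l.foldl (fun (_ : Bool) (_ : ℕ) => true) true = true := by
  induction l with
  | nil => rfl
  | cons a t ih => simpa using ih

lemma wordVal_long (φ : ℕ → Bool) (w : List ℕ) (h : 2 ≤ w.length) :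
    wordVal (fun _ _ => true) φ w = true := by
  match w, h with
  | a :: b :: t, _ =>
    show (b :: t).foldl (fun acc x => true) (φ a) = true
    simpa using foldl_true t

lemma wordVal_single (φ : ℕ → Bool) (a : ℕ) :
    wordVal (fun _ _ => true) φ [a] = φ a := rfl

lemma len_one (l : List (List ℕ)) (h : ∀ w ∈ l, w ≠ []) (h2 : ¬ ∃ w ∈ l, 2 ≤ w.length) :
    ∀ w ∈ l, w.length = 1 := by
  intro w hw
  push_neg at h2
  have := h2 w hw
  have := h w hw
  have hlen : 0 < w.length := List.length_pos_iff.2 this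
  omega

lemma any_singletons (φ : ℕ → Bool) (l : List (List ℕ)) (h : ∀ w ∈ l, w.length = 1) :
    l.any (wordVal (fun _ _ => true) φ) = true ↔ ∃ n, (∃ w ∈ l, n ∈ w) ∧ φ n = true := by
  rw [List.any_eq_true]
  constructor
  · rintro ⟨w, hw, hval⟩
    obtain ⟨a, rfl⟩ := List.length_eq_one_iff.1 (h w hw)
    exact ⟨a, ⟨[a], hw, List.mem_singleton_self a⟩, hval⟩
  · rintro ⟨n, ⟨w, hw, hn⟩, hφ⟩
    obtain ⟨a, rfl⟩ := List.length_eq_one_iff.1 (h w hw)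
    obtain rfl : n = a := List.mem_singleton.1 hn
    exact ⟨[n], hw, hφ⟩

/-- Lemma 1.1(6): `T₂` (addition `∨`, multiplication constantly `true`) satisfies
`u ≈ v` iff both `u` and `v` contain an entry of length at least 2, or all entries
of `u` and `v` have length 1 and `C(u) = C(v)`. -/
theorem T2_satisfies_iff (u v : List (List ℕ))
    (hu : u ≠ []) (hv : v ≠ []) (hu' : ∀ w ∈ u, w ≠ []) (hv' : ∀ w ∈ v, w ≠ []) :
    Satisfies (fun x y => x || y) (fun _ _ => true) u v ↔
      (((∃ w ∈ u, 2 ≤ w.length) ∧ (∃ w ∈ v, 2 ≤ w.length)) ∨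
       ((∀ w ∈ u, w.length = 1) ∧ (∀ w ∈ v, w.length = 1) ∧
        {n : ℕ | ∃ w ∈ u, n ∈ w} = {n : ℕ | ∃ w ∈ v, n ∈ w})) := by
  have sat_iff : ∀ (φ : ℕ → Bool),
      Satisfies (fun x y => x || y) (fun _ _ => true) u v →
      u.any (wordVal (fun _ _ => true) φ) = v.any (wordVal (fun _ _ => true) φ) := by
    intro φ hsat
    have := hsat φ
    rwa [termVal_any, termVal_any] at this
  constructor
  · intro hsat
    by_cases hU : ∃ w ∈ u, 2 ≤ w.length
    · by_cases hV : ∃ w ∈ v, 2 ≤ w.length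
      · exact Or.inl ⟨hU, hV⟩
      · exfalso
        have h := sat_iff (fun _ => false) hsat
        obtain ⟨w, hw, hlen⟩ := hU
        have hu1 : u.any (wordVal (fun _ _ => true) (fun _ => false)) = true :=
          List.any_eq_true.2 ⟨w, hw, wordVal_long _ _ hlen⟩
        have hv1 : v.any (wordVal (fun _ _ => true) (fun _ => false)) = false := by
          rw [List.any_eq_false]
          intro q hq
          obtain ⟨a, rfl⟩ := List.length_eq_one_iff.1 (len_one v hv' hV q hq)
          simp [wordVal]
        rw [hu1, hv1] at h
        simp at h
    · by_cases hV : ∃ w ∈ v, 2 ≤ w.length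
      · exfalso
        have h := sat_iff (fun _ => false) hsat
        obtain ⟨w, hw, hlen⟩ := hV
        have hv1 : v.any (wordVal (fun _ _ => true) (fun _ => false)) = true :=
          List.any_eq_true.2 ⟨w, hw, wordVal_long _ _ hlen⟩
        have hu1 : u.any (wordVal (fun _ _ => true) (fun _ => false)) = false := by
          rw [List.any_eq_false]
          intro q hq
          obtain ⟨a, rfl⟩ := List.length_eq_one_iff.1 (len_one u hu' hU q hq)
          simp [wordVal]
        rw [hu1, hv1] at h
        simp at h
      · have h1 := len_one u hu' hU
        have h2 := len_one v hv' hV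
        refine Or.inr ⟨h1, h2, ?_⟩
        ext n
        simp only [Set.mem_setOf_eq]
        have key : ∀ l : List (List ℕ), (∀ w ∈ l, w.length = 1) →
            (l.any (wordVal (fun _ _ => true) (fun m => decide (m = n))) = true ↔
              ∃ w ∈ l, n ∈ w) := by
          intro l hl
          rw [any_singletons _ _ hl]
          constructor
          · rintro ⟨m, hm, hφ⟩
            obtain rfl : m = n := of_decide_eq_true hφ
            exact hm
          · intro hm
            exact ⟨n, hm, by simp⟩
        have h := sat_iff (fun m => decide (m = n)) hsat
        rw [← key u h1, ← key v h2, h]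
  · rintro (⟨⟨w, hw, hlw⟩, ⟨q, hq, hlq⟩⟩ | ⟨h1, h2, hset⟩)
    · intro φ
      rw [termVal_any, termVal_any,
        List.any_eq_true.2 ⟨w, hw, wordVal_long _ _ hlw⟩,
        List.any_eq_true.2 ⟨q, hq, wordVal_long _ _ hlq⟩]
    · intro φ
      rw [termVal_any, termVal_any]
      have hset' := Set.ext_iff.1 hset
      simp only [Set.mem_setOf_eq] at hset'
      rcases hU : u.any (wordVal (fun _ _ => true) φ) with _ | _
      · symm
        rw [← Bool.not_eq_true] at hU ⊢
        intro hV
        apply hU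
        obtain ⟨m, hm, hφ⟩ := (any_singletons φ v h2).1 hV
        exact (any_singletons φ u h1).2 ⟨m, (hset' m).2 hm, hφ⟩
      · symm
        obtain ⟨m, hm, hφ⟩ := (any_singletons φ u h1).1 hU
        exact (any_singletons φ v h2).2 ⟨m, (hset' m).1 hm, hφ⟩
end
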